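/- (Term-by-term integration.) Let 0 < α < 1 and 0 < β < 1 with ∑_{s∈S} r_s^{α+β} < 1 (i.e. α+β exceeds the similarity dimension of K). Suppose (f_m) and (g_m) are sequences of α-Hölder, respectively β-Hölder, functions on K that are uniformly bounded in Hölder norm (there is C with sup|f_m| + |f_m|_α ≤ C and sup|g_m| + |g_m|_β ≤ C for all m), and that: (1) f_m → f and g_m → g uniformly on K; (2) (f,g) is integrable; (3) the series ∑_{n=1}^∞ |ψ_n(f_m, g_m)| converges uniformly in m (for every ε > 0 there is n_0 with ∑_{n≥n_0} |ψ_n(f_m,g_m)| < ε for all m). Then each pair (f_m, g_m) is integrable and lim_{m→∞} φ(f_m, g_m) = φ(f, g). -/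

import Mathlib

/-!
Write `u m n = φ_n(f_m, g_m)`. Refining a level-`n` cell `f_s(I)` into its `N + 1` children
and the `N` gaps between them turns `φ_{n+1} + ψ_{n+1} - φ_n` into a sum, over words `s`, of
defects of the trapezoid sum along the chain `a_{s0} ≤ b_{s0} ≤ a_{s1} ≤ ⋯ ≤ b_{sN}` inside
`f_s(I)`. A three-point defect is a difference of products of an `α`-Hölder and a `β`-Hölder
increment, hence `O(C² (r_s |I|)^{α+β})`, and summing over `s` gives `O(ρⁿ)` with
`ρ = ∑ r_s^{α+β} < 1`. So `|u m (n+1) - u m n| ≤ |ψ_{n+1}(f_m, g_m)| + D ρⁿ` with `D` independent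
of `m`, and by hypothesis (3) the sequences `u m` are Cauchy uniformly in `m`. As
`u m n → φ_n(f, g)` for each fixed `n` and `φ_n(f, g) → φ(f, g)`, the two limits can be
interchanged (Moore–Osgood).
-/

open Filter Topology

/-- For a word `s = (s_1, …, s_n)` over the alphabet `Fin (N+1)`,
`wmap F s = F s_1 ∘ ⋯ ∘ F s_n`. -/
noncomputable def wmap {N n : ℕ} (F : Fin (N + 1) → ℝ → ℝ) (s : Fin n → Fin (N + 1)) :
    ℝ → ℝ :=
  (List.ofFn s).foldr (fun i h => F i ∘ h) id

/-- `φ_n(f,g) = ∑_{s ∈ S^n} (f(a_s)+f(b_s))·(g(b_s)−g(a_s))`. -/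
noncomputable def phiSeq {N : ℕ} (F : Fin (N + 1) → ℝ → ℝ) (a b : ℝ) (f g : ℝ → ℝ)
    (n : ℕ) : ℝ :=
  ∑ s : Fin n → Fin (N + 1),
    (f (wmap F s a) + f (wmap F s b)) * (g (wmap F s b) - g (wmap F s a))

/-- `psiSeq F a b f g n` is `ψ_{n+1}(f,g)`. -/
noncomputable def psiSeq {N : ℕ} (F : Fin (N + 1) → ℝ → ℝ) (a b : ℝ) (f g : ℝ → ℝ)
    (n : ℕ) : ℝ :=
  ∑ s : Fin n → Fin (N + 1), ∑ l : Fin N,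
    (f (wmap F s (F l.castSucc b)) + f (wmap F s (F l.succ a))) *
      (g (wmap F s (F l.succ a)) - g (wmap F s (F l.castSucc b)))

/-- The self-similar set `K = ⋂_{n ≥ 1} ⋃_{s ∈ S^n} f_s([a,b])`. -/
noncomputable def ssSet {N : ℕ} (F : Fin (N + 1) → ℝ → ℝ) (a b : ℝ) : Set ℝ :=
  ⋂ n : ℕ, ⋃ s : Fin (n + 1) → Fin (N + 1), wmap F s '' Set.Icc a b

open Finset Set Function

section Words

variable {N : ℕ} {F : Fin (N + 1) → ℝ → ℝ}

@[simp]
lemma wmap_zero (s : Fin 0 → Fin (N + 1)) (x : ℝ) : wmap F s x = x := by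
  simp [wmap]

lemma wmap_cons {n : ℕ} (i : Fin (N + 1)) (s : Fin n → Fin (N + 1)) (x : ℝ) :
    wmap F (Fin.cons i s) x = F i (wmap F s x) := by
  simp [wmap, List.ofFn_succ]

lemma wmap_snoc {n : ℕ} (s : Fin n → Fin (N + 1)) (l : Fin (N + 1)) (x : ℝ) :
    wmap F (Fin.snoc s l) x = wmap F s (F l x) := by
  induction s using Fin.consInduction with
  | elim0 => simp [wmap, List.ofFn_succ, Fin.snoc]
  | cons i s ih => rw [← Fin.cons_snoc_eq_snoc_cons, wmap_cons, wmap_cons, ih]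

lemma wmap_const_apply {i : Fin (N + 1)} {z : ℝ} (hz : IsFixedPt (F i) z) (n : ℕ) :
    wmap F (fun _ : Fin n => i) z = z := by
  induction n with
  | zero => simp
  | succ n ih =>
    rw [← Fin.cons_self_tail (fun _ : Fin (n + 1) => i), wmap_cons]
    exact (congrArg _ ih).trans hz

end Words

lemma sum_fun_fin_succ_eq_sum_snoc {α M : Type*} [Fintype α] [AddCommMonoid M] {n : ℕ}
    (φ : (Fin (n + 1) → α) → M) :
    ∑ t : Fin (n + 1) → α, φ t = ∑ s : Fin n → α, ∑ l, φ (Fin.snoc s l) := by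
  rw [← (Fin.snocEquiv fun _ => α).sum_comp, Fintype.sum_prod_type, Finset.sum_comm]
  rfl

section AffineSystem

variable {N : ℕ} {r c : Fin (N + 1) → ℝ} {F : Fin (N + 1) → ℝ → ℝ} {a b : ℝ}

lemma wmap_sub_wmap (hF : ∀ s x, F s x = r s * x + c s) {n : ℕ} (s : Fin n → Fin (N + 1))
    (x y : ℝ) : wmap F s x - wmap F s y = (∏ i, r (s i)) * (x - y) := by
  induction s using Fin.consInduction with
  | elim0 => simp
  | cons i s ih =>
    simp only [wmap_cons, hF, Fin.prod_univ_succ, Fin.cons_zero, Fin.cons_succ]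
    grind

lemma wmap_mem_Icc_wmap (hF : ∀ s x, F s x = r s * x + c s) (hr0 : ∀ s, 0 < r s) {n : ℕ}
    (s : Fin n → Fin (N + 1)) {x : ℝ} (hx : x ∈ Icc a b) :
    wmap F s x ∈ Icc (wmap F s a) (wmap F s b) := by
  have hR : 0 ≤ ∏ i, r (s i) := prod_nonneg fun i _ => (hr0 (s i)).le
  constructor <;> rw [← sub_nonneg, wmap_sub_wmap hF]
  exacts [mul_nonneg hR (sub_nonneg.2 hx.1), mul_nonneg hR (sub_nonneg.2 hx.2)]

lemma left_mem_ssSet (hab : a ≤ b) (ha : F 0 a = a) : a ∈ ssSet F a b :=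
  mem_iInter.2 fun _ => mem_iUnion.2 ⟨fun _ => 0, a, left_mem_Icc.2 hab, wmap_const_apply ha _⟩

lemma right_mem_ssSet (hab : a ≤ b) (hb : F (Fin.last N) b = b) : b ∈ ssSet F a b :=
  mem_iInter.2 fun _ =>
    mem_iUnion.2 ⟨fun _ => Fin.last N, b, right_mem_Icc.2 hab, wmap_const_apply hb _⟩

structure OrderedAffineIFS (r c : Fin (N + 1) → ℝ) (F : Fin (N + 1) → ℝ → ℝ) (a b : ℝ) : Prop where
  apply_eq : ∀ s x, F s x = r s * x + c s
  ratio_pos : ∀ s, 0 < r s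
  le : a ≤ b
  left_fixed : F 0 a = a
  right_fixed : F (Fin.last N) b = b
  gap : ∀ l : Fin N, F l.castSucc b ≤ F l.succ a

namespace OrderedAffineIFS

variable (h : OrderedAffineIFS r c F a b)
include h

lemma mapsTo_Icc (i : Fin (N + 1)) : MapsTo (F i) (Icc a b) (Icc a b) := by
  have hmono : ∀ j, Monotone (F j) := fun j x y hxy => by
    simp only [h.apply_eq]; nlinarith [h.ratio_pos j]
  have left : ∀ j, a ≤ F j a := by
    intro j
    induction j using Fin.induction with
    | zero => rw [h.left_fixed]
    | succ j ih => exact ih.trans ((hmono _ h.le).trans (h.gap j))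
  have right : ∀ j, F j b ≤ b := by
    intro j
    induction j using Fin.reverseInduction with
    | last => rw [h.right_fixed]
    | cast j ih => exact (h.gap j).trans ((hmono _ h.le).trans ih)
  exact fun x hx => ⟨(left i).trans (hmono i hx.1), (hmono i hx.2).trans (right i)⟩

lemma ssSet_subset_Icc : ssSet F a b ⊆ Icc a b := by
  intro x hx
  obtain ⟨s, y, hy, rfl⟩ := mem_iUnion.1 (mem_iInter.1 hx 0)
  rw [← Fin.cons_self_tail s, wmap_cons, wmap_zero]
  exact h.mapsTo_Icc _ hy

lemma mapsTo_ssSet (i : Fin (N + 1)) : MapsTo (F i) (ssSet F a b) (ssSet F a b) := by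
  intro x hx
  refine mem_iInter.2 fun n => mem_iUnion.2 ?_
  cases n with
  | zero =>
    refine ⟨fun _ => i, x, h.ssSet_subset_Icc hx, ?_⟩
    rw [← Fin.cons_self_tail (fun _ => i), wmap_cons, wmap_zero]
  | succ n =>
    obtain ⟨s, y, hy, rfl⟩ := mem_iUnion.1 (mem_iInter.1 hx n)
    exact ⟨Fin.cons i s, y, hy, wmap_cons i s y⟩

lemma mapsTo_wmap_ssSet {n : ℕ} (s : Fin n → Fin (N + 1)) :
    MapsTo (wmap F s) (ssSet F a b) (ssSet F a b) := by
  induction s using Fin.consInduction with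
  | elim0 => exact fun x hx => by rwa [wmap_zero]
  | cons i s ih => exact fun x hx => by rw [wmap_cons]; exact h.mapsTo_ssSet i (ih hx)

end OrderedAffineIFS

end AffineSystem

noncomputable def trapezoid (f g : ℝ → ℝ) (x y : ℝ) : ℝ :=
  (f x + f y) * (g y - g x)

noncomputable def trapezoidDefect (f g : ℝ → ℝ) (p q r : ℝ) : ℝ :=
  trapezoid f g p q + trapezoid f g q r - trapezoid f g p r

section Trapezoid

variable {f g : ℝ → ℝ} {S : Set ℝ} {C α β : ℝ}

lemma trapezoidDefect_eq (f g : ℝ → ℝ) (p q r : ℝ) :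
    trapezoidDefect f g p q r = (f q - f p) * (g r - g q) - (g q - g p) * (f r - f q) := by
  simp only [trapezoidDefect, trapezoid]
  ring

lemma abs_sub_le_of_holder {φ : ℝ → ℝ} {γ ℓ x y : ℝ} (hγ : 0 ≤ γ) (hC : 0 ≤ C)
    (hφ : ∀ x ∈ S, ∀ y ∈ S, |φ x - φ y| ≤ C * |x - y| ^ γ) (hx : x ∈ S) (hy : y ∈ S)
    (hxy : |y - x| ≤ ℓ) : |φ y - φ x| ≤ C * ℓ ^ γ :=
  (hφ y hy x hx).trans (mul_le_mul_of_nonneg_left (Real.rpow_le_rpow (abs_nonneg _) hxy hγ) hC)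

lemma abs_trapezoidDefect_le (hα : 0 ≤ α) (hβ : 0 ≤ β) (hC : 0 ≤ C)
    (hf : ∀ x ∈ S, ∀ y ∈ S, |f x - f y| ≤ C * |x - y| ^ α)
    (hg : ∀ x ∈ S, ∀ y ∈ S, |g x - g y| ≤ C * |x - y| ^ β) {ℓ p q r : ℝ}
    (hp : p ∈ S) (hq : q ∈ S) (hr : r ∈ S) (hpq : |q - p| ≤ ℓ) (hqr : |r - q| ≤ ℓ) :
    |trapezoidDefect f g p q r| ≤ 2 * C ^ 2 * ℓ ^ (α + β) := by
  have hℓ : 0 ≤ ℓ := (abs_nonneg _).trans hpq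
  have hfpq := abs_sub_le_of_holder hα hC hf hp hq hpq
  have hfqr := abs_sub_le_of_holder hα hC hf hq hr hqr
  have hgpq := abs_sub_le_of_holder hβ hC hg hp hq hpq
  have hgqr := abs_sub_le_of_holder hβ hC hg hq hr hqr
  rw [trapezoidDefect_eq, Real.rpow_add_of_nonneg hℓ hα hβ]
  calc _ ≤ |f q - f p| * |g r - g q| + |g q - g p| * |f r - f q| := by
        rw [← abs_mul, ← abs_mul]; exact abs_sub _ _
    _ ≤ (C * ℓ ^ α) * (C * ℓ ^ β) + (C * ℓ ^ β) * (C * ℓ ^ α) := by gcongr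
    _ = 2 * C ^ 2 * (ℓ ^ α * ℓ ^ β) := by ring

lemma sum_trapezoid_chain_sub {N : ℕ} (f g : ℝ → ℝ) (x y : Fin (N + 1) → ℝ) :
    ∑ l, trapezoid f g (x l) (y l) + ∑ l : Fin N, trapezoid f g (y l.castSucc) (x l.succ)
        - trapezoid f g (x 0) (y (Fin.last N)) =
      ∑ l, trapezoidDefect f g (x 0) (x l) (y l) +
        ∑ l : Fin N, trapezoidDefect f g (x 0) (y l.castSucc) (x l.succ) := by
  have hx := Fin.sum_univ_succ fun l => trapezoid f g (x 0) (x l)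
  have hy := Fin.sum_univ_castSucc fun l => trapezoid f g (x 0) (y l)
  simp only [trapezoidDefect, sum_add_distrib, sum_sub_distrib, trapezoid, sub_self, mul_zero]
    at hx hy ⊢
  linarith

lemma abs_sum_trapezoid_chain_sub_le {N : ℕ} (hα : 0 ≤ α) (hβ : 0 ≤ β) (hC : 0 ≤ C)
    (hf : ∀ x ∈ S, ∀ y ∈ S, |f x - f y| ≤ C * |x - y| ^ α)
    (hg : ∀ x ∈ S, ∀ y ∈ S, |g x - g y| ≤ C * |x - y| ^ β) {x y : Fin (N + 1) → ℝ} {u v : ℝ}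
    (hx : ∀ l, x l ∈ S ∩ Icc u v) (hy : ∀ l, y l ∈ S ∩ Icc u v) :
    |∑ l, trapezoid f g (x l) (y l) + ∑ l : Fin N, trapezoid f g (y l.castSucc) (x l.succ)
        - trapezoid f g (x 0) (y (Fin.last N))| ≤
      (2 * N + 1) * (2 * C ^ 2 * (v - u) ^ (α + β)) := by
  have hdist : ∀ {p q}, p ∈ S ∩ Icc u v → q ∈ S ∩ Icc u v → |q - p| ≤ v - u :=
    fun hp hq => (Real.dist_eq _ _ ▸ Real.dist_le_of_mem_Icc hq.2 hp.2)
  have hD : ∀ {p q r}, p ∈ S ∩ Icc u v → q ∈ S ∩ Icc u v → r ∈ S ∩ Icc u v →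
      |trapezoidDefect f g p q r| ≤ 2 * C ^ 2 * (v - u) ^ (α + β) := fun hp hq hr =>
    abs_trapezoidDefect_le hα hβ hC hf hg hp.1 hq.1 hr.1 (hdist hp hq) (hdist hq hr)
  rw [sum_trapezoid_chain_sub]
  calc _ ≤ ∑ l, |trapezoidDefect f g (x 0) (x l) (y l)| +
        ∑ l : Fin N, |trapezoidDefect f g (x 0) (y l.castSucc) (x l.succ)| :=
        (abs_add_le _ _).trans (add_le_add (abs_sum_le_sum_abs _ _) (abs_sum_le_sum_abs _ _))
    _ ≤ ∑ _l : Fin (N + 1), 2 * C ^ 2 * (v - u) ^ (α + β) +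
        ∑ _l : Fin N, 2 * C ^ 2 * (v - u) ^ (α + β) :=
        add_le_add (sum_le_sum fun l _ => hD (hx 0) (hx l) (hy l))
          (sum_le_sum fun l _ => hD (hx 0) (hy _) (hx _))
    _ = _ := by simp only [sum_const, card_univ, Fintype.card_fin, nsmul_eq_mul]; push_cast; ring

end Trapezoid

lemma phiSeq_succ {N : ℕ} (F : Fin (N + 1) → ℝ → ℝ) (a b : ℝ) (f g : ℝ → ℝ) (n : ℕ) :
    phiSeq F a b f g (n + 1) =
      ∑ s : Fin n → Fin (N + 1), ∑ l, trapezoid f g (wmap F s (F l a)) (wmap F s (F l b)) := by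
  simp only [phiSeq, sum_fun_fin_succ_eq_sum_snoc, wmap_snoc, trapezoid]

namespace OrderedAffineIFS

variable {N : ℕ} {r c : Fin (N + 1) → ℝ} {F : Fin (N + 1) → ℝ → ℝ} {a b : ℝ}
  (h : OrderedAffineIFS r c F a b)
include h

lemma abs_phiSeq_succ_add_psiSeq_sub_le {f g : ℝ → ℝ} {C α β : ℝ} (hα : 0 ≤ α) (hβ : 0 ≤ β)
    (hC : 0 ≤ C) (hf : ∀ x ∈ ssSet F a b, ∀ y ∈ ssSet F a b, |f x - f y| ≤ C * |x - y| ^ α)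
    (hg : ∀ x ∈ ssSet F a b, ∀ y ∈ ssSet F a b, |g x - g y| ≤ C * |x - y| ^ β) (n : ℕ) :
    |phiSeq F a b f g (n + 1) + psiSeq F a b f g n - phiSeq F a b f g n| ≤
      (2 * N + 1) * (2 * C ^ 2 * (b - a) ^ (α + β)) * (∑ s, r s ^ (α + β)) ^ n := by
  have hword : ∀ s : Fin n → Fin (N + 1),
      |∑ l, trapezoid f g (wmap F s (F l a)) (wmap F s (F l b)) +
          ∑ l : Fin N, trapezoid f g (wmap F s (F l.castSucc b)) (wmap F s (F l.succ a)) -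
          trapezoid f g (wmap F s a) (wmap F s b)| ≤
        (2 * N + 1) * (2 * C ^ 2 * (b - a) ^ (α + β)) * ∏ i, r (s i) ^ (α + β) := by
    intro s
    have hR : 0 ≤ ∏ i, r (s i) := prod_nonneg fun i _ => (h.ratio_pos _).le
    have hmem : ∀ z ∈ ssSet F a b, ∀ l, wmap F s (F l z) ∈
        ssSet F a b ∩ Icc (wmap F s a) (wmap F s b) := fun z hz l =>
      ⟨h.mapsTo_wmap_ssSet s (h.mapsTo_ssSet l hz),
        wmap_mem_Icc_wmap h.apply_eq h.ratio_pos s (h.mapsTo_Icc l (h.ssSet_subset_Icc hz))⟩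
    have hchain := abs_sum_trapezoid_chain_sub_le hα hβ hC hf hg
      (hmem a (left_mem_ssSet h.le h.left_fixed)) (hmem b (right_mem_ssSet h.le h.right_fixed))
    rw [h.left_fixed, h.right_fixed, wmap_sub_wmap h.apply_eq, Real.mul_rpow hR (sub_nonneg.2 h.le),
      ← Real.finsetProd_rpow _ _ fun i _ => (h.ratio_pos _).le] at hchain
    linarith
  calc _ = |∑ s : Fin n → Fin (N + 1),
        (∑ l, trapezoid f g (wmap F s (F l a)) (wmap F s (F l b)) +
          ∑ l : Fin N, trapezoid f g (wmap F s (F l.castSucc b)) (wmap F s (F l.succ a)) -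
          trapezoid f g (wmap F s a) (wmap F s b))| := by
        rw [phiSeq_succ, psiSeq, phiSeq]
        simp only [sum_add_distrib, sum_sub_distrib, trapezoid]
    _ ≤ ∑ s : Fin n → Fin (N + 1),
        (2 * N + 1) * (2 * C ^ 2 * (b - a) ^ (α + β)) * ∏ i, r (s i) ^ (α + β) :=
        (abs_sum_le_sum_abs _ _).trans (sum_le_sum fun s _ => hword s)
    _ = _ := by
        rw [← mul_sum, ← Fintype.prod_sum fun (_ : Fin n) s => r s ^ (α + β), prod_const,
          card_univ, Fintype.card_fin]

lemma abs_phiSeq_succ_sub_le {f g : ℝ → ℝ} {C α β : ℝ} (hα : 0 ≤ α) (hβ : 0 ≤ β)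
    (hC : 0 ≤ C) (hf : ∀ x ∈ ssSet F a b, ∀ y ∈ ssSet F a b, |f x - f y| ≤ C * |x - y| ^ α)
    (hg : ∀ x ∈ ssSet F a b, ∀ y ∈ ssSet F a b, |g x - g y| ≤ C * |x - y| ^ β) (n : ℕ) :
    |phiSeq F a b f g (n + 1) - phiSeq F a b f g n| ≤ |psiSeq F a b f g n| +
      (2 * N + 1) * (2 * C ^ 2 * (b - a) ^ (α + β)) * (∑ s, r s ^ (α + β)) ^ n :=
  calc _ ≤ |phiSeq F a b f g (n + 1) + psiSeq F a b f g n - phiSeq F a b f g n| +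
        |psiSeq F a b f g n| := (abs_sub _ _).trans_eq' (by ring_nf)
    _ ≤ _ := by
        rw [add_comm]
        gcongr
        exact h.abs_phiSeq_succ_add_psiSeq_sub_le hα hβ hC hf hg n

end OrderedAffineIFS

def UniformlySmallTails {ι : Type*} (e : ι → ℕ → ℝ) : Prop :=
  ∀ ε : ℝ, 0 < ε → ∃ n₀ : ℕ, ∀ i, ∀ n, ∑ j ∈ Ico n₀ n, e i j < ε

namespace UniformlySmallTails

variable {ι : Type*} {e e' : ι → ℕ → ℝ}

lemma add (he0 : ∀ i j, 0 ≤ e i j) (he'0 : ∀ i j, 0 ≤ e' i j) (he : UniformlySmallTails e)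
    (he' : UniformlySmallTails e') : UniformlySmallTails fun i j => e i j + e' i j := by
  intro ε hε
  obtain ⟨n₀, hn₀⟩ := he (ε / 2) (half_pos hε)
  obtain ⟨n₀', hn₀'⟩ := he' (ε / 2) (half_pos hε)
  refine ⟨max n₀ n₀', fun i n => ?_⟩
  have hle : ∀ {φ : ℕ → ℝ} {k : ℕ}, (∀ j, 0 ≤ φ j) → k ≤ max n₀ n₀' →
      ∑ j ∈ Ico (max n₀ n₀') n, φ j ≤ ∑ j ∈ Ico k n, φ j := fun hφ hk =>
    sum_le_sum_of_subset_of_nonneg (Ico_subset_Ico hk le_rfl) fun j _ _ => hφ j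
  rw [sum_add_distrib]
  linarith [hle (he0 i) (le_max_left _ _), hle (he'0 i) (le_max_right _ _), hn₀ i n, hn₀' i n]

lemma geometric {D ρ : ℝ} (hD : 0 ≤ D) (hρ0 : 0 ≤ ρ) (hρ1 : ρ < 1) :
    UniformlySmallTails fun (_ : ι) n => D * ρ ^ n := by
  intro ε hε
  have hlim : Tendsto (fun n => D * (ρ ^ n / (1 - ρ))) atTop (𝓝 0) := by
    simpa using ((tendsto_pow_atTop_nhds_zero_of_lt_one hρ0 hρ1).div_const (1 - ρ)).const_mul D
  obtain ⟨n₀, hn₀⟩ := (hlim.eventually_lt_const hε).exists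
  refine ⟨n₀, fun _ n => ?_⟩
  rw [← mul_sum]
  exact (mul_le_mul_of_nonneg_left (geom_sum_Ico_le_of_lt_one hρ0 hρ1) hD).trans_lt hn₀

lemma uniformCauchySeqOn (he : UniformlySmallTails e) {u : ι → ℕ → ℝ}
    (hu : ∀ i n, |u i (n + 1) - u i n| ≤ e i n) :
    UniformCauchySeqOn (fun n i => u i n) atTop univ := by
  rw [Metric.uniformCauchySeqOn_iff]
  intro ε hε
  obtain ⟨n₀, hn₀⟩ := he ε hε
  have key : ∀ i m n, n₀ ≤ m → m ≤ n → dist (u i m) (u i n) < ε := fun i m n hm hmn =>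
    calc dist (u i m) (u i n) ≤ ∑ j ∈ Ico m n, dist (u i j) (u i (j + 1)) :=
          dist_le_Ico_sum_dist (u i) hmn
      _ ≤ ∑ j ∈ Ico n₀ n, e i j := by
          refine sum_le_sum_of_subset_of_nonneg (Ico_subset_Ico hm le_rfl)
            (fun j _ _ => (abs_nonneg _).trans (hu i j)) |>.trans' (sum_le_sum fun j _ => ?_)
          rw [dist_comm, Real.dist_eq]
          exact hu i j
      _ < ε := hn₀ i n
  refine ⟨n₀, fun m hm n hn i _ => ?_⟩
  rcases le_total m n with hmn | hnm
  · exact key i m n hm hmn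
  · exact dist_comm (u i n) (u i m) ▸ key i n m hn hnm

end UniformlySmallTails

lemma tendstoUniformlyOn_of_forall_abs_sub_lt {fm : ℕ → ℝ → ℝ} {f : ℝ → ℝ} {S : Set ℝ}
    (h : ∀ ε : ℝ, 0 < ε → ∃ M : ℕ, ∀ m : ℕ, M ≤ m → ∀ x ∈ S, |fm m x - f x| < ε) :
    TendstoUniformlyOn fm f atTop S :=
  Metric.tendstoUniformlyOn_iff.2 fun ε hε => eventually_atTop.2 <| (h ε hε).imp
    fun _ hM m hm x hx => by rw [dist_comm, Real.dist_eq]; exact hM m hm x hx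

lemma OrderedAffineIFS.tendsto_phiSeq {N : ℕ} {r c : Fin (N + 1) → ℝ} {F : Fin (N + 1) → ℝ → ℝ}
    {a b : ℝ} (h : OrderedAffineIFS r c F a b) {ι : Type*} {l : Filter ι} {fm gm : ι → ℝ → ℝ}
    {f g : ℝ → ℝ} (hf : ∀ x ∈ ssSet F a b, Tendsto (fun m => fm m x) l (𝓝 (f x)))
    (hg : ∀ x ∈ ssSet F a b, Tendsto (fun m => gm m x) l (𝓝 (g x))) (n : ℕ) :
    Tendsto (fun m => phiSeq F a b (fm m) (gm m) n) l (𝓝 (phiSeq F a b f g n)) := by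
  refine tendsto_finsetSum _ fun s _ => ?_
  have ha := h.mapsTo_wmap_ssSet s (left_mem_ssSet h.le h.left_fixed)
  have hb := h.mapsTo_wmap_ssSet s (right_mem_ssSet h.le h.right_fixed)
  exact ((hf _ ha).add (hf _ hb)).mul ((hg _ hb).sub (hg _ ha))

theorem term_by_term_integration_general
    {N : ℕ} (r c : Fin (N + 1) → ℝ)
    (hr0 : ∀ s, 0 < r s)
    (a b : ℝ) (hab : a < b)
    (F : Fin (N + 1) → ℝ → ℝ) (hF : ∀ s x, F s x = r s * x + c s)
    (ha : F 0 a = a) (hb : F (Fin.last N) b = b)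
    (hord : ∀ l : Fin N, F l.castSucc b ≤ F l.succ a)
    (α β : ℝ) (hα0 : 0 < α) (hβ0 : 0 < β)
    (hdim : ∑ s : Fin (N + 1), r s ^ (α + β) < 1)
    (fm gm : ℕ → ℝ → ℝ) (f g : ℝ → ℝ) (C : ℝ)
    (hfC : ∀ m : ℕ, (∀ x ∈ ssSet F a b, |fm m x| ≤ C) ∧
      ∀ x ∈ ssSet F a b, ∀ y ∈ ssSet F a b, |fm m x - fm m y| ≤ C * |x - y| ^ α)
    (hgC : ∀ m : ℕ, (∀ x ∈ ssSet F a b, |gm m x| ≤ C) ∧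
      ∀ x ∈ ssSet F a b, ∀ y ∈ ssSet F a b, |gm m x - gm m y| ≤ C * |x - y| ^ β)
    (hfu : ∀ ε : ℝ, 0 < ε → ∃ M : ℕ, ∀ m : ℕ, M ≤ m →
      ∀ x ∈ ssSet F a b, |fm m x - f x| < ε)
    (hgu : ∀ ε : ℝ, 0 < ε → ∃ M : ℕ, ∀ m : ℕ, M ≤ m →
      ∀ x ∈ ssSet F a b, |gm m x - g x| < ε)
    (L : ℝ) (hfg : Tendsto (phiSeq F a b f g) atTop (nhds L))
    (hpsi : ∀ ε : ℝ, 0 < ε → ∃ n₀ : ℕ, ∀ m : ℕ, ∀ n₂ : ℕ,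
      ∑ j ∈ Finset.Ico n₀ n₂, |psiSeq F a b (fm m) (gm m) j| < ε) :
    ∃ Φ : ℕ → ℝ,
      (∀ m : ℕ, Tendsto (phiSeq F a b (fm m) (gm m)) atTop (nhds (Φ m))) ∧
      Tendsto Φ atTop (nhds L) := by
  have h : OrderedAffineIFS r c F a b := ⟨hF, hr0, hab.le, ha, hb, hord⟩
  have hC : 0 ≤ C := (abs_nonneg _).trans ((hfC 0).1 a (left_mem_ssSet hab.le ha))
  set ρ := ∑ s, r s ^ (α + β)
  set D := (2 * N + 1) * (2 * C ^ 2 * (b - a) ^ (α + β))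
  have hρ : 0 ≤ ρ := sum_nonneg fun s _ => Real.rpow_nonneg (hr0 s).le _
  have hD : 0 ≤ D := by positivity
  have hcauchy := (UniformlySmallTails.add (fun _ _ => abs_nonneg _)
      (fun _ _ => mul_nonneg hD (pow_nonneg hρ _)) hpsi (.geometric hD hρ hdim)).uniformCauchySeqOn
    fun m => h.abs_phiSeq_succ_sub_le hα0.le hβ0.le hC (hfC m).2 (hgC m).2
  choose Φ hΦ using fun m => cauchySeq_tendsto_of_complete (hcauchy.cauchySeq (mem_univ m))
  refine ⟨Φ, hΦ, ?_⟩
  have hlim : ∀ n, Tendsto (fun m => phiSeq F a b (fm m) (gm m) n) atTop (𝓝 (phiSeq F a b f g n)) :=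
    h.tendsto_phiSeq (fun x hx => (tendstoUniformlyOn_of_forall_abs_sub_lt hfu).tendsto_at hx)
      (fun x hx => (tendstoUniformlyOn_of_forall_abs_sub_lt hgu).tendsto_at hx)
  exact (tendstoUniformlyOn_univ.1 (hcauchy.tendstoUniformlyOn_of_tendsto fun m _ => hΦ m))
    |>.tendsto_of_eventually_tendsto (.of_forall hlim) hfg

/-- Term-by-term integration: under uniform Hölder bounds, uniform convergence
`f_m → f`, `g_m → g` on `K`, integrability of `(f,g)`, and uniform (in `m`)
convergence of `∑_n |ψ_n(f_m,g_m)|`, each `(f_m,g_m)` is integrable and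
`φ(f_m,g_m) → φ(f,g)`. -/
theorem term_by_term_integration
    {N : ℕ} (r c : Fin (N + 1) → ℝ)
    (hr0 : ∀ s, 0 < r s) (hr1 : ∀ s, r s < 1)
    (a b : ℝ) (hab : a < b)
    (F : Fin (N + 1) → ℝ → ℝ) (hF : ∀ s x, F s x = r s * x + c s)
    (ha : F 0 a = a) (hb : F (Fin.last N) b = b)
    (hord : ∀ l : Fin N, F l.castSucc b ≤ F l.succ a)
    (α β : ℝ) (hα0 : 0 < α) (hα1 : α < 1) (hβ0 : 0 < β) (hβ1 : β < 1)
    (hdim : ∑ s : Fin (N + 1), r s ^ (α + β) < 1)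
    (fm gm : ℕ → ℝ → ℝ) (f g : ℝ → ℝ) (C : ℝ)
    (hfC : ∀ m : ℕ, (∀ x ∈ ssSet F a b, |fm m x| ≤ C) ∧
      ∀ x ∈ ssSet F a b, ∀ y ∈ ssSet F a b, |fm m x - fm m y| ≤ C * |x - y| ^ α)
    (hgC : ∀ m : ℕ, (∀ x ∈ ssSet F a b, |gm m x| ≤ C) ∧
      ∀ x ∈ ssSet F a b, ∀ y ∈ ssSet F a b, |gm m x - gm m y| ≤ C * |x - y| ^ β)
    (hfu : ∀ ε : ℝ, 0 < ε → ∃ M : ℕ, ∀ m : ℕ, M ≤ m →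
      ∀ x ∈ ssSet F a b, |fm m x - f x| < ε)
    (hgu : ∀ ε : ℝ, 0 < ε → ∃ M : ℕ, ∀ m : ℕ, M ≤ m →
      ∀ x ∈ ssSet F a b, |gm m x - g x| < ε)
    (L : ℝ) (hfg : Tendsto (phiSeq F a b f g) atTop (nhds L))
    (hpsi : ∀ ε : ℝ, 0 < ε → ∃ n₀ : ℕ, ∀ m : ℕ, ∀ n₂ : ℕ,
      ∑ j ∈ Finset.Ico n₀ n₂, |psiSeq F a b (fm m) (gm m) j| < ε) :
    ∃ Φ : ℕ → ℝ,
      (∀ m : ℕ, Tendsto (phiSeq F a b (fm m) (gm m)) atTop (nhds (Φ m))) ∧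
      Tendsto Φ atTop (nhds L) :=
  term_by_term_integration_general r c hr0 a b hab F hF ha hb hord α β hα0 hβ0 hdim fm gm f g C hfC
    hgC hfu hgu L hfg hpsi
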